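/- arXiv:1505.01240 — 3 statements merged into one kernel-verified Lean document; each statement's English description precedes it below -/
import Mathlib

section
/- Let p₁, p₂, p₃ ∈ ℍ^{n+1} be nonzero vectors with ⟨pᵢ,pᵢ⟩ ≤ 0 for i = 1,2,3, pairwise non-proportional. Then the quaternionic triple product ⟨p₁,p₂,p₃⟩ = ⟨p₂,p₁⟩⟨p₃,p₂⟩⟨p₁,p₃⟩ is a nonzero quaternion and Re(⟨p₁,p₂,p₃⟩) ≤ 0. -/
open scoped Quaternion

noncomputable section

/-- The quaternionic Hermitian form of signature (n,1) on ℍ^{n+1}: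
`⟨z,w⟩ = w̄₁ z_{n+1} + Σ_{i=2}^n w̄ᵢ zᵢ + w̄_{n+1} z₁`. -/
noncomputable def herm {n : ℕ} (z w : Fin (n+1) → ℍ[ℝ]) : ℍ[ℝ] :=
  star (w 0) * z (Fin.last n)
    + ∑ i ∈ Finset.Ioo (0 : Fin (n+1)) (Fin.last n), star (w i) * z i
    + star (w (Fin.last n)) * z 0

/-- `w` is (right-)proportional to `z`: `w = zλ` for some `λ ∈ ℍ`. -/
def Prp {n : ℕ} (z w : Fin (n+1) → ℍ[ℝ]) : Prop :=
  ∃ lam : ℍ[ℝ], w = fun i => z i * lam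

/-- Right scalar multiplication on ℍ^{n+1}. -/
noncomputable def smulR {n : ℕ} (z : Fin (n+1) → ℍ[ℝ]) (lam : ℍ[ℝ]) :
    Fin (n+1) → ℍ[ℝ] := fun i => z i * lam

/-- The quaternionic triple product `⟨p₁,p₂,p₃⟩ = ⟨p₂,p₁⟩⟨p₃,p₂⟩⟨p₁,p₃⟩`. -/
noncomputable def tri {n : ℕ} (p₁ p₂ p₃ : Fin (n+1) → ℍ[ℝ]) : ℍ[ℝ] :=
  herm p₂ p₁ * herm p₃ p₂ * herm p₁ p₃

/-- The quaternionic Cartan angular invariant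
`𝔸(p₁,p₂,p₃) = arccos(Re(−⟨p₁,p₂,p₃⟩)/|⟨p₁,p₂,p₃⟩|)`. -/
noncomputable def cartan {n : ℕ} (p₁ p₂ p₃ : Fin (n+1) → ℍ[ℝ]) : ℝ :=
  Real.arccos ((-(tri p₁ p₂ p₃)).re / ‖tri p₁ p₂ p₃‖)

/-- The quaternionic cross-ratio `𝕏(p₁,p₂,p₃,p₄) = ⟨p₃,p₁⟩⟨p₃,p₂⟩⁻¹⟨p₄,p₂⟩⟨p₄,p₁⟩⁻¹`. -/
noncomputable def crossX {n : ℕ} (p₁ p₂ p₃ p₄ : Fin (n+1) → ℍ[ℝ]) : ℍ[ℝ] :=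
  herm p₃ p₁ * (herm p₃ p₂)⁻¹ * herm p₄ p₂ * (herm p₄ p₁)⁻¹

/-- The group Sp(n,1) of quaternionic matrices preserving the Hermitian form. -/
def SpGrp (n : ℕ) : Set (Matrix (Fin (n+1)) (Fin (n+1)) ℍ[ℝ]) :=
  {g | ∀ z w : Fin (n+1) → ℍ[ℝ], herm (g.mulVec z) (g.mulVec w) = herm z w}

/-- Similarity of quaternions: `b = μ a μ⁻¹` for some nonzero `μ`. -/
def QSim (a b : ℍ[ℝ]) : Prop := ∃ mu : ℍ[ℝ], mu ≠ 0 ∧ b = mu * a * mu⁻¹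

/-!
On the hyperplane `u 0 = u (Fin.last n)`, the orthogonal complement of the negative vector
`(1, 0, …, 0, -1)`, the form is `2|u 0|² + Σ |u i|²`, hence positive definite. So a nonzero `z`
with `⟨z,z⟩ ≤ 0` has `z 0 ≠ z (Fin.last n)`, and every `v ⊥ z` can be pushed into that hyperplane
as `v - zλ` without increasing `Re⟨v,v⟩`: the orthogonal complement of `z` contains no negative
vectors, and its null vectors lie on the line `zℍ`. This gives `⟨pⱼ,pᵢ⟩ ≠ 0`.

For the sign, rescale `p₁`, `p₃` so that `⟨p₁,p₂⟩ = ⟨p₃,p₂⟩ = 1`, which multiplies the real part of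
the triple product by a positive factor and turns the triple product into `⟨p₁,p₃⟩`. Then
`p₁ - p₃ ⊥ p₂`, so `0 ≤ Re⟨p₁ - p₃, p₁ - p₃⟩ ≤ -2 Re⟨p₁,p₃⟩`.
-/

namespace Quaternion

theorem re_sum {ι : Type*} (s : Finset ι) (f : ι → ℍ[ℝ]) :
    (∑ i ∈ s, f i).re = ∑ i ∈ s, (f i).re :=
  map_sum (QuaternionAlgebra.reₗ _ _ _) f s

theorem normSq_pos {a : ℍ[ℝ]} : 0 < normSq a ↔ a ≠ 0 :=
  normSq_nonneg.lt_iff_ne'.trans normSq_ne_zero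

theorem re_mul_comm (a b : ℍ[ℝ]) : (a * b).re = (b * a).re := by
  simp only [re_mul]; ring

theorem re_star_mul_mul_self (a x : ℍ[ℝ]) : (star a * x * a).re = normSq a * x.re := by
  rw [mul_assoc, re_mul_comm, mul_assoc, self_mul_star, mul_coe_eq_smul, re_smul, smul_eq_mul]

end Quaternion

open Quaternion

section HermitianForm

variable {n : ℕ}

theorem star_herm (z w : Fin (n+1) → ℍ[ℝ]) : star (herm z w) = herm w z := by
  unfold herm
  simp only [star_add, star_mul, star_star, star_sum]
  abel

theorem herm_zero_left (w : Fin (n+1) → ℍ[ℝ]) : herm 0 w = 0 := by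
  simp [herm]

theorem herm_sub_left (u v w : Fin (n+1) → ℍ[ℝ]) :
    herm (u - v) w = herm u w - herm v w := by
  unfold herm
  simp only [Pi.sub_apply, mul_sub, Finset.sum_sub_distrib]
  abel

theorem herm_sub_right (u v w : Fin (n+1) → ℍ[ℝ]) :
    herm u (v - w) = herm u v - herm u w := by
  rw [← star_herm, herm_sub_left, star_sub, star_herm, star_herm]

theorem herm_smulR_left (z w : Fin (n+1) → ℍ[ℝ]) (l : ℍ[ℝ]) :
    herm (smulR z l) w = herm z w * l := by
  simp only [herm, smulR, add_mul, Finset.sum_mul, mul_assoc]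

theorem herm_smulR_right (z w : Fin (n+1) → ℍ[ℝ]) (l : ℍ[ℝ]) :
    herm z (smulR w l) = star l * herm z w := by
  rw [← star_herm, herm_smulR_left, star_mul, star_herm]

theorem smulR_one (z : Fin (n+1) → ℍ[ℝ]) : smulR z 1 = z :=
  funext fun i => mul_one (z i)

theorem re_herm_self_of_first_eq_last {u : Fin (n+1) → ℍ[ℝ]} (hu : u 0 = u (Fin.last n)) :
    (herm u u).re = 2 * normSq (u 0)
      + ∑ i ∈ Finset.Ioo (0 : Fin (n+1)) (Fin.last n), normSq (u i) := by
  simp only [herm, ← hu, star_mul_self, re_add, re_coe, re_sum]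
  ring

theorem re_herm_self_nonneg_of_first_eq_last {u : Fin (n+1) → ℍ[ℝ]}
    (hu : u 0 = u (Fin.last n)) : 0 ≤ (herm u u).re := by
  rw [re_herm_self_of_first_eq_last hu]
  have := Finset.sum_nonneg fun i (_ : i ∈ Finset.Ioo 0 (Fin.last n)) => normSq_nonneg (a := u i)
  linarith [normSq_nonneg (a := u 0)]

theorem eq_zero_of_first_eq_last {u : Fin (n+1) → ℍ[ℝ]} (hu : u 0 = u (Fin.last n))
    (huu : (herm u u).re ≤ 0) : u = 0 := by
  rw [re_herm_self_of_first_eq_last hu] at huu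
  have hmid : ∀ i ∈ Finset.Ioo 0 (Fin.last n), 0 ≤ normSq (u i) := fun i _ => normSq_nonneg
  have hsum := Finset.sum_nonneg hmid
  have h0 : u 0 = 0 := normSq_eq_zero.mp (by linarith [normSq_nonneg (a := u 0)])
  have hmid0 := (Finset.sum_eq_zero_iff_of_nonneg hmid).mp (by linarith [normSq_nonneg (a := u 0)])
  funext i
  rcases eq_or_ne i 0 with rfl | hi0
  · exact h0
  rcases eq_or_ne i (Fin.last n) with rfl | hil
  · rw [← hu, h0]; rfl
  exact normSq_eq_zero.mp <| hmid0 i <|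
    Finset.mem_Ioo.mpr ⟨Fin.pos_iff_ne_zero.mpr hi0, Fin.lt_last_iff_ne_last.mpr hil⟩

theorem first_ne_last_of_re_herm_self_nonpos {z : Fin (n+1) → ℍ[ℝ]} (hz : z ≠ 0)
    (hzz : (herm z z).re ≤ 0) : z 0 ≠ z (Fin.last n) :=
  fun h => hz (eq_zero_of_first_eq_last h hzz)

theorem exists_sub_smulR_first_eq_last {z : Fin (n+1) → ℍ[ℝ]} (hz : z 0 ≠ z (Fin.last n))
    (v : Fin (n+1) → ℍ[ℝ]) :
    ∃ l, (v - smulR z l) 0 = (v - smulR z l) (Fin.last n) := by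
  refine ⟨(z 0 - z (Fin.last n))⁻¹ * (v 0 - v (Fin.last n)), sub_eq_zero.mp ?_⟩
  have hz' : z 0 - z (Fin.last n) ≠ 0 := sub_ne_zero.mpr hz
  simp only [Pi.sub_apply, smulR]
  rw [show ∀ a b c d l : ℍ[ℝ], a - c * l - (b - d * l) = (a - b) - (c - d) * l from
    fun _ _ _ _ _ => by noncomm_ring, ← mul_assoc, mul_inv_cancel₀ hz', one_mul, sub_self]

theorem re_herm_self_smulR (z : Fin (n+1) → ℍ[ℝ]) (l : ℍ[ℝ]) :
    (herm (smulR z l) (smulR z l)).re = normSq l * (herm z z).re := by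
  rw [herm_smulR_left, herm_smulR_right, re_star_mul_mul_self]

theorem re_herm_sub_smulR_self {v z : Fin (n+1) → ℍ[ℝ]} (hvz : herm v z = 0) (l : ℍ[ℝ]) :
    (herm (v - smulR z l) (v - smulR z l)).re = (herm v v).re + normSq l * (herm z z).re := by
  have hzv : herm z v = 0 := by rw [← star_herm, hvz, star_zero]
  simp only [herm_sub_left, herm_sub_right, herm_smulR_left, herm_smulR_right, hvz, hzv]
  rw [← re_star_mul_mul_self, ← re_add]
  congr 1
  noncomm_ring

theorem re_herm_self_nonneg_of_herm_eq_zero {v z : Fin (n+1) → ℍ[ℝ]} (hz : z ≠ 0)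
    (hzz : (herm z z).re ≤ 0) (hvz : herm v z = 0) : 0 ≤ (herm v v).re := by
  obtain ⟨l, hl⟩ := exists_sub_smulR_first_eq_last (first_ne_last_of_re_herm_self_nonpos hz hzz) v
  have hu := re_herm_self_nonneg_of_first_eq_last hl
  rw [re_herm_sub_smulR_self hvz] at hu
  nlinarith [normSq_nonneg (a := l)]

theorem prp_of_herm_eq_zero {v z : Fin (n+1) → ℍ[ℝ]} (hz : z ≠ 0)
    (hzz : (herm z z).re ≤ 0) (hvz : herm v z = 0) (hvv : (herm v v).re ≤ 0) : Prp z v := by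
  obtain ⟨l, hl⟩ := exists_sub_smulR_first_eq_last (first_ne_last_of_re_herm_self_nonpos hz hzz) v
  refine ⟨l, sub_eq_zero.mp (eq_zero_of_first_eq_last (u := v - smulR z l) hl ?_)⟩
  rw [re_herm_sub_smulR_self hvz]
  nlinarith [normSq_nonneg (a := l)]

theorem herm_ne_zero_of_not_prp {z w : Fin (n+1) → ℍ[ℝ]} (hz : z ≠ 0)
    (hzz : (herm z z).re ≤ 0) (hww : (herm w w).re ≤ 0) (hzw : ¬ Prp z w) : herm w z ≠ 0 :=
  fun h => hzw (prp_of_herm_eq_zero hz hzz h hww)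

theorem re_tri_smulR (p₁ p₂ p₃ : Fin (n+1) → ℍ[ℝ]) (a b c : ℍ[ℝ]) :
    (tri (smulR p₁ a) (smulR p₂ b) (smulR p₃ c)).re
      = normSq a * normSq b * normSq c * (tri p₁ p₂ p₃).re := by
  simp only [tri, herm_smulR_left, herm_smulR_right]
  rw [show ∀ x y w : ℍ[ℝ], star a * (x * b) * (star b * (y * c)) * (star c * (w * a))
      = star a * (x * (b * star b) * y * (c * star c) * w) * a from fun _ _ _ => by noncomm_ring]
  simp only [re_star_mul_mul_self, self_mul_star, mul_coe_eq_smul, smul_mul_assoc, re_smul,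
    smul_eq_mul]
  ring

theorem re_tri_nonpos_of_herm_eq_one {q₁ p₂ q₃ : Fin (n+1) → ℍ[ℝ]}
    (hg₁ : (herm q₁ q₁).re ≤ 0) (hg₂ : (herm p₂ p₂).re ≤ 0) (hg₃ : (herm q₃ q₃).re ≤ 0)
    (h₁ : herm q₁ p₂ = 1) (h₃ : herm q₃ p₂ = 1) : (tri q₁ p₂ q₃).re ≤ 0 := by
  have hp₂ : p₂ ≠ 0 := by
    rintro rfl
    rw [← star_herm, herm_zero_left, star_zero] at h₁
    exact zero_ne_one h₁
  have htri : tri q₁ p₂ q₃ = herm q₁ q₃ := by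
    rw [tri, ← star_herm, h₁, h₃, star_one, one_mul, one_mul]
  have hv : herm (q₁ - q₃) p₂ = 0 := by rw [herm_sub_left, h₁, h₃, sub_self]
  have hvv := re_herm_self_nonneg_of_herm_eq_zero hp₂ hg₂ hv
  rw [herm_sub_left, herm_sub_right, herm_sub_right, ← star_herm q₁ q₃] at hvv
  simp only [re_sub, re_star] at hvv
  rw [htri]
  linarith

theorem re_tri_nonpos {p₁ p₂ p₃ : Fin (n+1) → ℍ[ℝ]}
    (hg₁ : (herm p₁ p₁).re ≤ 0) (hg₂ : (herm p₂ p₂).re ≤ 0) (hg₃ : (herm p₃ p₃).re ≤ 0) :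
    (tri p₁ p₂ p₃).re ≤ 0 := by
  rcases eq_or_ne (herm p₁ p₂) 0 with ha | ha
  · rw [tri, ← star_herm, ha, star_zero, zero_mul, zero_mul]; rfl
  rcases eq_or_ne (herm p₃ p₂) 0 with hb | hb
  · rw [tri, hb, mul_zero, zero_mul]; rfl
  have key := re_tri_nonpos_of_herm_eq_one (p₂ := p₂)
    (q₁ := smulR p₁ (herm p₁ p₂)⁻¹) (q₃ := smulR p₃ (herm p₃ p₂)⁻¹)
    (by rw [re_herm_self_smulR]; exact mul_nonpos_of_nonneg_of_nonpos normSq_nonneg hg₁) hg₂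
    (by rw [re_herm_self_smulR]; exact mul_nonpos_of_nonneg_of_nonpos normSq_nonneg hg₃)
    (by rw [herm_smulR_left, mul_inv_cancel₀ ha]) (by rw [herm_smulR_left, mul_inv_cancel₀ hb])
  rw [← smulR_one p₂, re_tri_smulR, smulR_one] at key
  refine nonpos_of_mul_nonpos_right key ?_
  simp only [normSq_inv, map_one, mul_one]
  exact mul_pos (inv_pos.mpr (normSq_pos.mpr ha)) (inv_pos.mpr (normSq_pos.mpr hb))

end HermitianForm

theorem stmt1_general {n : ℕ} (p₁ p₂ p₃ : Fin (n+1) → ℍ[ℝ])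
    (h1 : p₁ ≠ 0) (h2 : p₂ ≠ 0)
    (hg1 : (herm p₁ p₁).re ≤ 0) (hg2 : (herm p₂ p₂).re ≤ 0) (hg3 : (herm p₃ p₃).re ≤ 0)
    (h12 : ¬ Prp p₁ p₂) (h13 : ¬ Prp p₁ p₃) (h23 : ¬ Prp p₂ p₃) :
    tri p₁ p₂ p₃ ≠ 0 ∧ (tri p₁ p₂ p₃).re ≤ 0 := by
  have h21 : herm p₂ p₁ ≠ 0 := herm_ne_zero_of_not_prp h1 hg1 hg2 h12
  have h32 : herm p₃ p₂ ≠ 0 := herm_ne_zero_of_not_prp h2 hg2 hg3 h23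
  have h13' : herm p₁ p₃ ≠ 0 := by
    rw [← star_herm, star_ne_zero]
    exact herm_ne_zero_of_not_prp h1 hg1 hg3 h13
  exact ⟨mul_ne_zero (mul_ne_zero h21 h32) h13', re_tri_nonpos hg1 hg2 hg3⟩

/-- For nonzero, pairwise non-proportional `p₁,p₂,p₃` with `⟨pᵢ,pᵢ⟩ ≤ 0`,
the triple product `⟨p₁,p₂,p₃⟩` is nonzero and has nonpositive real part. -/
theorem stmt1 {n : ℕ} (hn : 2 ≤ n) (p₁ p₂ p₃ : Fin (n+1) → ℍ[ℝ])
    (h1 : p₁ ≠ 0) (h2 : p₂ ≠ 0) (h3 : p₃ ≠ 0)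
    (hg1 : (herm p₁ p₁).re ≤ 0) (hg2 : (herm p₂ p₂).re ≤ 0) (hg3 : (herm p₃ p₃).re ≤ 0)
    (h12 : ¬ Prp p₁ p₂) (h13 : ¬ Prp p₁ p₃) (h23 : ¬ Prp p₂ p₃) :
    tri p₁ p₂ p₃ ≠ 0 ∧ (tri p₁ p₂ p₃).re ≤ 0 :=
  stmt1_general p₁ p₂ p₃ h1 h2 hg1 hg2 hg3 h12 h13 h23
end
end

section
/- Let p₁, p₂, p₃, p₄ ∈ ℍ^{n+1} be nonzero vectors with ⟨pᵢ,pᵢ⟩ ≤ 0, pairwise non-proportional, let λ₁, λ₂, λ₃, λ₄ ∈ ℍ be nonzero, and let g ∈ Sp(n,1). Then Re 𝕏(p₁λ₁,p₂λ₂,p₃λ₃,p₄λ₄) = Re 𝕏(p₁,p₂,p₃,p₄) = Re 𝕏(g p₁, g p₂, g p₃, g p₄) and |𝕏(p₁λ₁,p₂λ₂,p₃λ₃,p₄λ₄)| = |𝕏(p₁,p₂,p₃,p₄)| = |𝕏(g p₁, g p₂, g p₃, g p₄)|. -/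
open scoped Quaternion

noncomputable section

/-!
Rescaling `pᵢ ↦ pᵢλᵢ` conjugates the cross-ratio by `λ̄₁`: the factors `λ₂, λ₃, λ₄` cancel
between each inner product and the inverse next to it. Conjugation preserves the real part
and the modulus. An element of `Sp(n,1)` preserves every inner product, hence the
cross-ratio itself.
-/

lemma Quaternion.re_mul_comm_s4 {R : Type*} [CommRing R] (a b : ℍ[R]) :
    (a * b).re = (b * a).re := by
  simp only [Quaternion.re_mul]
  ring

namespace QSim

variable {a b : ℍ[ℝ]}

lemma re_eq (h : QSim a b) : b.re = a.re := by
  obtain ⟨mu, hmu, rfl⟩ := h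
  rw [Quaternion.re_mul_comm_s4, ← mul_assoc, inv_mul_cancel₀ hmu, one_mul]

lemma norm_eq (h : QSim a b) : ‖b‖ = ‖a‖ := by
  obtain ⟨mu, hmu, rfl⟩ := h
  rw [norm_mul, norm_mul, norm_inv, mul_comm ‖mu‖, mul_assoc,
    mul_inv_cancel₀ (norm_ne_zero_iff.2 hmu), mul_one]

end QSim

section CrossRatio

variable {n : ℕ}

lemma herm_smulR (z w : Fin (n+1) → ℍ[ℝ]) (a b : ℍ[ℝ]) :
    herm (smulR z a) (smulR w b) = star b * herm z w * a := by
  simp [herm, smulR, star_mul, Finset.mul_sum, Finset.sum_mul, mul_add, add_mul, mul_assoc]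

lemma crossX_smulR (p₁ p₂ p₃ p₄ : Fin (n+1) → ℍ[ℝ]) (l₁ l₂ l₃ l₄ : ℍ[ℝ])
    (hl₂ : l₂ ≠ 0) (hl₃ : l₃ ≠ 0) (hl₄ : l₄ ≠ 0) :
    crossX (smulR p₁ l₁) (smulR p₂ l₂) (smulR p₃ l₃) (smulR p₄ l₄)
      = star l₁ * crossX p₁ p₂ p₃ p₄ * (star l₁)⁻¹ := by
  have hl₂' : star l₂ ≠ 0 := star_ne_zero.2 hl₂
  simp only [crossX, herm_smulR, mul_inv_rev]
  simp [mul_assoc, hl₃, hl₄, hl₂']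

lemma qsim_crossX_smulR (p₁ p₂ p₃ p₄ : Fin (n+1) → ℍ[ℝ]) {l₁ l₂ l₃ l₄ : ℍ[ℝ]}
    (hl₁ : l₁ ≠ 0) (hl₂ : l₂ ≠ 0) (hl₃ : l₃ ≠ 0) (hl₄ : l₄ ≠ 0) :
    QSim (crossX p₁ p₂ p₃ p₄) (crossX (smulR p₁ l₁) (smulR p₂ l₂) (smulR p₃ l₃) (smulR p₄ l₄)) :=
  ⟨star l₁, star_ne_zero.2 hl₁, crossX_smulR p₁ p₂ p₃ p₄ l₁ l₂ l₃ l₄ hl₂ hl₃ hl₄⟩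

lemma crossX_mulVec_of_mem_SpGrp {g : Matrix (Fin (n+1)) (Fin (n+1)) ℍ[ℝ]} (hg : g ∈ SpGrp n)
    (p₁ p₂ p₃ p₄ : Fin (n+1) → ℍ[ℝ]) :
    crossX (g.mulVec p₁) (g.mulVec p₂) (g.mulVec p₃) (g.mulVec p₄) = crossX p₁ p₂ p₃ p₄ := by
  simp only [crossX, hg _ _]

end CrossRatio

theorem stmt4_general {n : ℕ} (p₁ p₂ p₃ p₄ : Fin (n+1) → ℍ[ℝ])
    (l₁ l₂ l₃ l₄ : ℍ[ℝ])
    (hl1 : l₁ ≠ 0) (hl2 : l₂ ≠ 0) (hl3 : l₃ ≠ 0) (hl4 : l₄ ≠ 0)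
    (g : Matrix (Fin (n+1)) (Fin (n+1)) ℍ[ℝ]) (hg : g ∈ SpGrp n) :
    ((crossX (smulR p₁ l₁) (smulR p₂ l₂) (smulR p₃ l₃) (smulR p₄ l₄)).re
        = (crossX p₁ p₂ p₃ p₄).re
      ∧ (crossX p₁ p₂ p₃ p₄).re
        = (crossX (g.mulVec p₁) (g.mulVec p₂) (g.mulVec p₃) (g.mulVec p₄)).re)
    ∧ (‖crossX (smulR p₁ l₁) (smulR p₂ l₂) (smulR p₃ l₃) (smulR p₄ l₄)‖
        = ‖crossX p₁ p₂ p₃ p₄‖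
      ∧ ‖crossX p₁ p₂ p₃ p₄‖
        = ‖crossX (g.mulVec p₁) (g.mulVec p₂) (g.mulVec p₃) (g.mulVec p₄)‖) := by
  have hsim := qsim_crossX_smulR p₁ p₂ p₃ p₄ hl1 hl2 hl3 hl4
  rw [crossX_mulVec_of_mem_SpGrp hg]
  exact ⟨⟨hsim.re_eq, rfl⟩, ⟨hsim.norm_eq, rfl⟩⟩

/-- the real part and modulus of the quaternionic cross-ratio are invariant under
right rescaling of the points and under the action of `Sp(n,1)`. -/
theorem stmt4 {n : ℕ} (hn : 2 ≤ n) (p₁ p₂ p₃ p₄ : Fin (n+1) → ℍ[ℝ])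
    (h1 : p₁ ≠ 0) (h2 : p₂ ≠ 0) (h3 : p₃ ≠ 0) (h4 : p₄ ≠ 0)
    (hg1 : (herm p₁ p₁).re ≤ 0) (hg2 : (herm p₂ p₂).re ≤ 0)
    (hg3 : (herm p₃ p₃).re ≤ 0) (hg4 : (herm p₄ p₄).re ≤ 0)
    (h12 : ¬ Prp p₁ p₂) (h13 : ¬ Prp p₁ p₃) (h14 : ¬ Prp p₁ p₄)
    (h23 : ¬ Prp p₂ p₃) (h24 : ¬ Prp p₂ p₄) (h34 : ¬ Prp p₃ p₄)
    (l₁ l₂ l₃ l₄ : ℍ[ℝ])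
    (hl1 : l₁ ≠ 0) (hl2 : l₂ ≠ 0) (hl3 : l₃ ≠ 0) (hl4 : l₄ ≠ 0)
    (g : Matrix (Fin (n+1)) (Fin (n+1)) ℍ[ℝ]) (hg : g ∈ SpGrp n) :
    ((crossX (smulR p₁ l₁) (smulR p₂ l₂) (smulR p₃ l₃) (smulR p₄ l₄)).re
        = (crossX p₁ p₂ p₃ p₄).re
      ∧ (crossX p₁ p₂ p₃ p₄).re
        = (crossX (g.mulVec p₁) (g.mulVec p₂) (g.mulVec p₃) (g.mulVec p₄)).re)
    ∧ (‖crossX (smulR p₁ l₁) (smulR p₂ l₂) (smulR p₃ l₃) (smulR p₄ l₄)‖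
        = ‖crossX p₁ p₂ p₃ p₄‖
      ∧ ‖crossX p₁ p₂ p₃ p₄‖
        = ‖crossX (g.mulVec p₁) (g.mulVec p₂) (g.mulVec p₃) (g.mulVec p₄)‖) :=
  stmt4_general p₁ p₂ p₃ p₄ l₁ l₂ l₃ l₄ hl1 hl2 hl3 hl4 g hg
end
end

section
/- Let u, v ∈ ℍ^{n+1} be null vectors with ⟨u,v⟩ = −1, let t, k ∈ ℝ, and set z = u e^{t/2} + v e^{−t/2} and w = u e^{k/2} + v e^{−k/2}. Then z and w are negative vectors with ⟨z,z⟩ = ⟨w,w⟩ = −2, the quaternionic cross-ratio 𝕏(z,u,w,v) equals the real number 1 + e^{k−t}, and the Bergman distance ρ(z,w) satisfies ρ(z,w) = |t − k| = |log(𝕏(z,u,w,v) − 1)|. -/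
open scoped Quaternion

noncomputable section

/-- Inverse hyperbolic cosine. -/
noncomputable def arcosh (x : ℝ) : ℝ := Real.log (x + Real.sqrt (x^2 - 1))

/-- Bergman distance between (negative) vectors:
`ρ(z,w) = 2 arccosh √(|⟨z,w⟩|²/(⟨z,z⟩⟨w,w⟩))`. -/
noncomputable def rho {n : ℕ} (z w : Fin (n+1) → ℍ[ℝ]) : ℝ :=
  2 * arcosh (Real.sqrt (‖herm z w‖^2 / ((herm z z).re * (herm w w).re)))

/-! Along the geodesic `γ(s) = u e^{s/2} + v e^{-s/2}` spanned by null vectors with `⟨u,v⟩ = -1`,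
every inner product among `u`, `v` and the points `γ(s)` is real, and
`⟨γ(s), γ(r)⟩ = -2 cosh((s - r)/2)`. Hence `⟨γ(s), γ(s)⟩ = -2`, the cross-ratio collapses to a
real computation with exponentials, and the Bergman distance is `2 arcosh (cosh ((t - k)/2))`. -/

section Herm

variable {n : ℕ}

lemma herm_swap (z w : Fin (n+1) → ℍ[ℝ]) : herm w z = star (herm z w) := by
  simp only [herm, star_add, star_sum, star_mul, star_star]
  abel

lemma herm_add_mul_left (a b w : Fin (n+1) → ℍ[ℝ]) (p q : ℍ[ℝ]) :
    herm (fun i => a i * p + b i * q) w = herm a w * p + herm b w * q := by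
  simp only [herm, mul_add, Finset.sum_add_distrib, add_mul, Finset.sum_mul, mul_assoc]
  abel

lemma herm_add_mul_right (z a b : Fin (n+1) → ℍ[ℝ]) (p q : ℍ[ℝ]) :
    herm z (fun i => a i * p + b i * q) = star p * herm z a + star q * herm z b := by
  rw [herm_swap, herm_add_mul_left, star_add, star_mul, star_mul, ← herm_swap, ← herm_swap]

lemma herm_swap_of_eq_neg_one {z w : Fin (n+1) → ℍ[ℝ]} (h : herm z w = -1) : herm w z = -1 := by
  rw [herm_swap, h, star_neg, star_one]

end Herm

lemma arcosh_cosh (x : ℝ) : arcosh (Real.cosh x) = |x| := by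
  have hsinh : Real.sqrt (Real.cosh x ^ 2 - 1) = Real.sinh |x| := by
    rw [← Real.cosh_abs, Real.cosh_sq, add_sub_cancel_right,
      Real.sqrt_sq (Real.sinh_nonneg_iff.2 (abs_nonneg x))]
  rw [arcosh, hsinh, ← Real.cosh_abs, Real.cosh_add_sinh, Real.log_exp]

section Geodesic

variable {n : ℕ} (u v : Fin (n+1) → ℍ[ℝ])

def geodesicPoint (s : ℝ) : Fin (n+1) → ℍ[ℝ] :=
  fun i => u i * ((Real.exp (s/2) : ℝ) : ℍ[ℝ]) + v i * ((Real.exp (-s/2) : ℝ) : ℍ[ℝ])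

lemma herm_geodesicPoint_left_eq (w : Fin (n+1) → ℍ[ℝ]) (s : ℝ) :
    herm (geodesicPoint u v s) w
      = herm u w * ((Real.exp (s/2) : ℝ) : ℍ[ℝ]) + herm v w * ((Real.exp (-s/2) : ℝ) : ℍ[ℝ]) := by
  unfold geodesicPoint
  exact herm_add_mul_left u v w _ _

lemma herm_geodesicPoint_right_eq (z : Fin (n+1) → ℍ[ℝ]) (r : ℝ) :
    herm z (geodesicPoint u v r)
      = ((Real.exp (r/2) : ℝ) : ℍ[ℝ]) * herm z u + ((Real.exp (-r/2) : ℝ) : ℍ[ℝ]) * herm z v := by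
  unfold geodesicPoint
  rw [herm_add_mul_right, Quaternion.star_coe, Quaternion.star_coe]

variable {u v}

lemma herm_geodesicPoint_u (huu : herm u u = 0) (huv : herm u v = -1) (s : ℝ) :
    herm (geodesicPoint u v s) u = ((-Real.exp (-s/2) : ℝ) : ℍ[ℝ]) := by
  rw [herm_geodesicPoint_left_eq, huu, herm_swap_of_eq_neg_one huv]
  simp

lemma herm_geodesicPoint_v (hvv : herm v v = 0) (huv : herm u v = -1) (s : ℝ) :
    herm (geodesicPoint u v s) v = ((-Real.exp (s/2) : ℝ) : ℍ[ℝ]) := by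
  rw [herm_geodesicPoint_left_eq, huv, hvv]
  simp

lemma herm_geodesicPoint (huu : herm u u = 0) (hvv : herm v v = 0) (huv : herm u v = -1)
    (s r : ℝ) :
    herm (geodesicPoint u v s) (geodesicPoint u v r)
      = ((-(2 * Real.cosh ((s - r)/2)) : ℝ) : ℍ[ℝ]) := by
  rw [herm_geodesicPoint_right_eq, herm_geodesicPoint_u huu huv, herm_geodesicPoint_v hvv huv,
    Real.cosh_eq]
  norm_cast
  congr 1
  rw [mul_neg, mul_neg, ← Real.exp_add, ← Real.exp_add]
  ring_nf

lemma herm_geodesicPoint_self (huu : herm u u = 0) (hvv : herm v v = 0)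
    (huv : herm u v = -1) (s : ℝ) :
    herm (geodesicPoint u v s) (geodesicPoint u v s) = ((-2 : ℝ) : ℍ[ℝ]) := by
  rw [herm_geodesicPoint huu hvv huv, sub_self, zero_div, Real.cosh_zero, mul_one]

lemma crossX_geodesicPoint (huu : herm u u = 0) (hvv : herm v v = 0) (huv : herm u v = -1)
    (t k : ℝ) :
    crossX (geodesicPoint u v t) u (geodesicPoint u v k) v
      = ((1 + Real.exp (k - t) : ℝ) : ℍ[ℝ]) := by
  rw [crossX, herm_geodesicPoint huu hvv huv, herm_geodesicPoint_u huu huv,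
    herm_swap_of_eq_neg_one huv, herm_swap _ v,
    herm_geodesicPoint_v hvv huv, Quaternion.star_coe]
  norm_cast
  congr 1
  push_cast
  rw [Real.cosh_eq]
  field_simp
  simp only [mul_add, mul_one, ← Real.exp_add]
  ring_nf

lemma rho_geodesicPoint (huu : herm u u = 0) (hvv : herm v v = 0) (huv : herm u v = -1)
    (t k : ℝ) :
    rho (geodesicPoint u v t) (geodesicPoint u v k) = |t - k| := by
  rw [rho, herm_geodesicPoint huu hvv huv, herm_geodesicPoint_self huu hvv huv,
    herm_geodesicPoint_self huu hvv huv, Quaternion.norm_coe, Quaternion.re_coe]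
  have hquot : ‖-(2 * Real.cosh ((t - k) / 2))‖ ^ 2 / (-2 * -2) = Real.cosh ((t - k) / 2) ^ 2 := by
    rw [norm_neg, Real.norm_eq_abs, sq_abs]
    ring
  rw [hquot, Real.sqrt_sq (Real.cosh_pos _).le, arcosh_cosh, abs_div, abs_two]
  ring

end Geodesic

theorem stmt7_general {n : ℕ} (u v : Fin (n+1) → ℍ[ℝ])
    (huu : herm u u = 0) (hvv : herm v v = 0)
    (huv : herm u v = -1) (t k : ℝ) (z w : Fin (n+1) → ℍ[ℝ])
    (hz : z = fun i => u i * ((Real.exp (t/2) : ℝ) : ℍ[ℝ])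
                + v i * ((Real.exp (-t/2) : ℝ) : ℍ[ℝ]))
    (hw : w = fun i => u i * ((Real.exp (k/2) : ℝ) : ℍ[ℝ])
                + v i * ((Real.exp (-k/2) : ℝ) : ℍ[ℝ])) :
    herm z z = ((-2 : ℝ) : ℍ[ℝ]) ∧ herm w w = ((-2 : ℝ) : ℍ[ℝ])
    ∧ crossX z u w v = ((1 + Real.exp (k - t) : ℝ) : ℍ[ℝ])
    ∧ rho z w = |t - k| ∧ |t - k| = |Real.log ((crossX z u w v - 1).re)| := by
  obtain rfl : z = geodesicPoint u v t := hz
  obtain rfl : w = geodesicPoint u v k := hw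
  have hX := crossX_geodesicPoint huu hvv huv t k
  refine ⟨herm_geodesicPoint_self huu hvv huv t, herm_geodesicPoint_self huu hvv huv k, hX,
    rho_geodesicPoint huu hvv huv t k, ?_⟩
  rw [hX, Quaternion.re_sub, Quaternion.re_coe, Quaternion.re_one, add_sub_cancel_left,
    Real.log_exp, abs_sub_comm]

/-- points on the geodesic with null endpoints `u,v`, `⟨u,v⟩ = -1`:
`z = u e^{t/2} + v e^{-t/2}` and `w = u e^{k/2} + v e^{-k/2}` satisfy `⟨z,z⟩ = ⟨w,w⟩ = -2`,
`𝕏(z,u,w,v) = 1 + e^{k-t}` and `ρ(z,w) = |t-k| = |log(𝕏(z,u,w,v)-1)|`. -/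
theorem stmt7 {n : ℕ} (hn : 2 ≤ n) (u v : Fin (n+1) → ℍ[ℝ])
    (hu : u ≠ 0) (hv : v ≠ 0) (huu : herm u u = 0) (hvv : herm v v = 0)
    (huv : herm u v = -1) (t k : ℝ) (z w : Fin (n+1) → ℍ[ℝ])
    (hz : z = fun i => u i * ((Real.exp (t/2) : ℝ) : ℍ[ℝ])
                + v i * ((Real.exp (-t/2) : ℝ) : ℍ[ℝ]))
    (hw : w = fun i => u i * ((Real.exp (k/2) : ℝ) : ℍ[ℝ])
                + v i * ((Real.exp (-k/2) : ℝ) : ℍ[ℝ])) :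
    herm z z = ((-2 : ℝ) : ℍ[ℝ]) ∧ herm w w = ((-2 : ℝ) : ℍ[ℝ])
    ∧ crossX z u w v = ((1 + Real.exp (k - t) : ℝ) : ℍ[ℝ])
    ∧ rho z w = |t - k| ∧ |t - k| = |Real.log ((crossX z u w v - 1).re)| :=
  stmt7_general u v huu hvv huv t k z w hz hw
end
end
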